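/- arXiv:2312.09683 — 5 statements merged into one kernel-verified Lean document; each statement's English description precedes it below -/
import Mathlib

section
/- With m machines, jobs J with processing times p_j > 0, cooling rates α_j < 0, heating rates β_j > 0, and single-job makespans q_j (equal to p_j(1-β_j/α_j)+1/α_j if p_jβ_j > 1, else p_j), the minimal makespan equals C_max = max( max_{j∈J} q_j, (Σ_{j∈J} p_j)/m ). Specifically, the schedule assigning each job constant rate s_j = p_j/C_max is feasible: s_j ≤ 1 for all j, Σ_j s_j ≤ m, and each job's final temperature α_j(C_max − p_j) + β_j p_j is at most 1. -/
/-!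
Job `j` alone fits in a horizon `C` exactly when `q j ≤ C`: its temperature condition
`α j * (C - p j) + β j * p j ≤ 1` says `C ≥ p j + (1 - p j * β j) / α j` (as `α j < 0`), which is
`q j` when `p j * β j > 1` and is at most `p j` otherwise. So the feasible horizons are those
with `q j ≤ C` for all `j` and `∑ p j ≤ m * C`, i.e. the interval `[C_max, ∞)`.
-/

noncomputable def singleJobMakespan (p α β : ℝ) : ℝ :=
  if 1 < p * β then p * (1 - β / α) + 1 / α else p

theorem singleJobMakespan_le_iff {p α β C : ℝ} (hα : α < 0) :
    singleJobMakespan p α β ≤ C ↔ p ≤ C ∧ α * (C - p) + β * p ≤ 1 := by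
  unfold singleJobMakespan
  split_ifs with hot
  · have hq : p * (1 - β / α) + 1 / α = p + (1 - p * β) / α := by
      field_simp
      ring
    have hpos : 0 < (1 - p * β) / α := div_pos_of_neg_of_neg (by linarith) hα
    have htemp : (1 - p * β) / α ≤ C - p ↔ α * (C - p) + β * p ≤ 1 := by
      rw [div_le_iff_of_neg hα]
      constructor <;> intro h <;> linarith
    rw [hq, ← htemp]
    exact ⟨fun h => ⟨by linarith, by linarith⟩, fun h => by linarith [h.2]⟩
  · refine ⟨fun h => ⟨h, ?_⟩, And.left⟩
    nlinarith

theorem multi_machine_makespan_general {ι : Type*} (J : Finset ι) (hJ : J.Nonempty)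
    (m : ℕ) (hm : 0 < m) (p α β q : ι → ℝ)
    (hα : ∀ j ∈ J, α j < 0)
    (hq : ∀ j ∈ J, q j = if 1 < p j * β j then p j * (1 - β j / α j) + 1 / α j else p j) :
    IsLeast {C : ℝ | (∀ j ∈ J, p j ≤ C) ∧ (∑ j ∈ J, p j) ≤ m * C ∧
        ∀ j ∈ J, α j * (C - p j) + β j * p j ≤ 1}
      (max (J.sup' hJ q) ((∑ j ∈ J, p j) / m)) := by
  suffices hfeasible : ∀ C : ℝ, ((∀ j ∈ J, p j ≤ C) ∧ (∑ j ∈ J, p j) ≤ m * C ∧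
      ∀ j ∈ J, α j * (C - p j) + β j * p j ≤ 1) ↔ max (J.sup' hJ q) ((∑ j ∈ J, p j) / m) ≤ C by
    rw [show {C : ℝ | _} = Set.Ici _ from Set.ext hfeasible]
    exact isLeast_Ici
  intro C
  have hjobs : (∀ j ∈ J, q j ≤ C) ↔
      (∀ j ∈ J, p j ≤ C) ∧ ∀ j ∈ J, α j * (C - p j) + β j * p j ≤ 1 := by
    rw [← forall₂_and]
    exact forall₂_congr fun j hj => hq j hj ▸ singleJobMakespan_le_iff (hα j hj)
  rw [max_le_iff, Finset.sup'_le_iff, hjobs, div_le_iff₀ (by exact_mod_cast hm), mul_comm C]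
  tauto

/-- on `m` machines, with single-job makespans `q j`, the minimal horizon
`C` admitting a feasible constant-rate schedule (each job's rate `p j / C ≤ 1`, total rate
at most `m`, each final temperature `α j*(C - p j) + β j*p j ≤ 1`) equals
`max (max_j q_j) ((∑ p_j)/m)`. -/
theorem multi_machine_makespan {ι : Type*} (J : Finset ι) (hJ : J.Nonempty)
    (m : ℕ) (hm : 0 < m) (p α β q : ι → ℝ)
    (hp : ∀ j ∈ J, 0 < p j) (hα : ∀ j ∈ J, α j < 0) (hβ : ∀ j ∈ J, 0 < β j)
    (hq : ∀ j ∈ J, q j = if 1 < p j * β j then p j * (1 - β j / α j) + 1 / α j else p j) :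
    IsLeast {C : ℝ | (∀ j ∈ J, p j ≤ C) ∧ (∑ j ∈ J, p j) ≤ m * C ∧
        ∀ j ∈ J, α j * (C - p j) + β j * p j ≤ 1}
      (max (J.sup' hJ q) ((∑ j ∈ J, p j) / m)) :=
  multi_machine_makespan_general J hJ m hm p α β q hα hq
end

section
/- Scaling lemma: let S be a feasible schedule with temperature functions T_j satisfying T_j(t) ≤ 1 for all t, and for γ > 1 define S^γ by S^γ_j(γt) = S_j(t)/γ. Then S^γ is feasible, its temperature functions satisfy T^γ_j(γt) ≤ T_j(t) for all t, with strict inequality whenever T_j(t) > 0, its completion times satisfy C_j(S^γ) = γ·C_j(S), and Σ_j S^γ_j(t) ≤ 1/γ < 1 for all t. -/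
open MeasureTheory

/-- A temperature function for the load function `S`: it starts at `0`, is nonnegative on
`[0,∞)`, is continuous there, and for `t > 0` evolves at rate `α(1-S t)+βS t`, clipped
below at `0` when the temperature is `0`. -/
def IsTempFun (α β : ℝ) (S T : ℝ → ℝ) : Prop :=
  T 0 = 0 ∧ (∀ t, 0 ≤ t → 0 ≤ T t) ∧ ContinuousOn T (Set.Ici 0) ∧
    ∀ t, 0 < t → HasDerivAt T
      (if 0 < T t then α * (1 - S t) + β * S t else max 0 (α * (1 - S t) + β * S t)) t

lemma dec_aux {g : ℝ → ℝ} {s t : ℝ} (hst : s < t)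
    (hc : ContinuousOn g (Set.Icc s t))
    (hd : ∀ u ∈ Set.Ioo s t, ∃ d, d < 0 ∧ HasDerivAt g d u) :
    g t < g s := by
  have h := strictAntiOn_of_deriv_neg (convex_Icc s t) hc (fun u hu => by
    rw [interior_Icc] at hu
    obtain ⟨d, hd0, hder⟩ := hd u hu
    rw [hder.deriv]; exact hd0)
  exact h (Set.left_mem_Icc.2 hst.le) (Set.right_mem_Icc.2 hst.le) hst

lemma comp_aux (α β γ : ℝ) (hα : α < 0) (hγ : 1 < γ) (S f T : ℝ → ℝ)
    (hf0 : f 0 = 0) (hTnn : ∀ t, 0 ≤ t → 0 ≤ T t) (hfnn : ∀ t, 0 ≤ t → 0 ≤ f t)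
    (hfc : ContinuousOn f (Set.Ici 0)) (hTc : ContinuousOn T (Set.Ici 0))
    (hf' : ∀ t, 0 < t → 0 < f t → HasDerivAt f (γ * α + (β - α) * S t) t)
    (hT' : ∀ t, 0 < t → ∃ d, α + (β - α) * S t ≤ d ∧ HasDerivAt T d t) :
    ∀ t, 0 ≤ t → f t ≤ T t ∧ (0 < T t → f t < T t) := by
  have hgderiv : ∀ u, 0 < u → 0 < f u →
      ∃ d, d < 0 ∧ HasDerivAt (fun v => f v - T v) d u := by
    intro u hu hfu
    obtain ⟨d, hdle, hdT⟩ := hT' u hu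
    refine ⟨γ * α + (β - α) * S u - d, ?_, (hf' u hu hfu).sub hdT⟩
    have : γ * α + (β - α) * S u - d ≤ γ * α - α := by linarith
    nlinarith
  have key : ∀ t, 0 ≤ t → f t ≤ T t := by
    intro t ht
    by_contra hcon
    push_neg at hcon
    have ht0 : 0 < t := by
      rcases ht.lt_or_eq with h | h
      · exact h
      · exfalso; rw [← h, hf0] at hcon; exact absurd (hTnn 0 le_rfl) (not_le.2 hcon)
    set g := fun v => f v - T v with hg
    have hsub : Set.Icc (0:ℝ) t ⊆ Set.Ici 0 := fun x hx => hx.1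
    have hgc : ContinuousOn g (Set.Icc 0 t) := (hfc.mono hsub).sub (hTc.mono hsub)
    set B := Set.Icc (0:ℝ) t ∩ g ⁻¹' Set.Iic 0 with hB
    have hB0 : (0:ℝ) ∈ B := ⟨⟨le_rfl, ht⟩, by
      simp only [Set.mem_preimage, Set.mem_Iic, hg, hf0]
      linarith [hTnn 0 le_rfl]⟩
    have hBclosed : IsClosed B := hgc.preimage_isClosed_of_isClosed isClosed_Icc isClosed_Iic
    have hBcomp : IsCompact B := isCompact_Icc.of_isClosed_subset hBclosed Set.inter_subset_left
    set s := sSup B with hs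
    have hsB : s ∈ B := hBcomp.sSup_mem ⟨0, hB0⟩
    have hst : s < t := by
      rcases hsB.1.2.lt_or_eq with h | h
      · exact h
      · exfalso
        have := hsB.2
        rw [h] at this
        simp only [Set.mem_preimage, Set.mem_Iic, hg] at this
        linarith
    have hfpos : ∀ u ∈ Set.Ioo s t, 0 < f u := by
      intro u hu
      by_contra hfu
      push_neg at hfu
      have hgu : g u ≤ 0 := by
        have := hTnn u (le_trans hsB.1.1 hu.1.le)
        simp only [hg]; linarith
      have : u ∈ B := ⟨⟨le_trans hsB.1.1 hu.1.le, hu.2.le⟩, hgu⟩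
      exact absurd (le_csSup hBcomp.bddAbove this) (not_le.2 hu.1)
    have hdec : g t < g s := by
      refine dec_aux hst (hgc.mono (Set.Icc_subset_Icc hsB.1.1 le_rfl)) (fun u hu => ?_)
      exact hgderiv u (lt_of_le_of_lt hsB.1.1 hu.1) (hfpos u hu)
    have : g t ≤ 0 := le_trans hdec.le hsB.2
    simp only [hg] at this
    linarith
  intro t ht
  refine ⟨key t ht, fun hTt => ?_⟩
  rcases (key t ht).lt_or_eq with h | heq
  · exact h
  exfalso
  have hft : 0 < f t := heq ▸ hTt
  have ht0 : 0 < t := by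
    rcases ht.lt_or_eq with h | h
    · exact h
    · rw [← h, hf0] at hft; linarith
  have hsub : Set.Icc (0:ℝ) t ⊆ Set.Ici 0 := fun x hx => hx.1
  set B := Set.Icc (0:ℝ) t ∩ f ⁻¹' {0} with hB
  have hB0 : (0:ℝ) ∈ B := ⟨⟨le_rfl, ht⟩, hf0⟩
  have hBclosed : IsClosed B :=
    (hfc.mono hsub).preimage_isClosed_of_isClosed isClosed_Icc isClosed_singleton
  have hBcomp : IsCompact B := isCompact_Icc.of_isClosed_subset hBclosed Set.inter_subset_left
  set s := sSup B with hs
  have hsB : s ∈ B := hBcomp.sSup_mem ⟨0, hB0⟩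
  have hst : s < t := by
    rcases hsB.1.2.lt_or_eq with h | h
    · exact h
    · exfalso
      have := hsB.2
      rw [h] at this
      simp only [Set.mem_preimage, Set.mem_singleton_iff] at this
      linarith
  have hfpos : ∀ u ∈ Set.Ioo s t, 0 < f u := by
    intro u hu
    rcases (hfnn u (le_trans hsB.1.1 hu.1.le)).lt_or_eq with h | h
    · exact h
    · exfalso
      have : u ∈ B := ⟨⟨le_trans hsB.1.1 hu.1.le, hu.2.le⟩, h.symm⟩
      exact absurd (le_csSup hBcomp.bddAbove this) (not_le.2 hu.1)
  have hgc : ContinuousOn (fun v => f v - T v) (Set.Icc s t) :=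
    ((hfc.mono hsub).sub (hTc.mono hsub)).mono (Set.Icc_subset_Icc hsB.1.1 le_rfl)
  have hdec : f t - T t < f s - T s :=
    dec_aux hst hgc (fun u hu => hgderiv u (lt_of_le_of_lt hsB.1.1 hu.1) (hfpos u hu))
  have hfs : f s = 0 := hsB.2
  have hTs : 0 ≤ T s := hTnn s hsB.1.1
  rw [heq] at hdec
  linarith

/-- scaling lemma: stretching a feasible schedule `S` by a factor `γ > 1`
via `Sγ j (γ t) = S j t / γ` yields a schedule whose total load is at most `1/γ < 1`,
whose temperatures satisfy `Tγ j (γ t) ≤ T j t` with strict inequality whenever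
`T j t > 0` (hence `Tγ ≤ 1`), and whose completion times are `γ · C j`. -/
theorem scaling_lemma (n : ℕ) (α β : ℝ) (hα : α < 0) (hβ : 0 < β) (γ : ℝ) (hγ : 1 < γ)
    (S Sγ T Tγ : Fin n → ℝ → ℝ) (p C : Fin n → ℝ)
    (hS01 : ∀ j t, 0 ≤ S j t ∧ S j t ≤ 1)
    (hman : ∀ t : ℝ, (∑ j, S j t) ≤ 1)
    (hscale : ∀ j (t : ℝ), Sγ j (γ * t) = S j t / γ)
    (hT : ∀ j, IsTempFun α β (S j) (T j))
    (hTγ : ∀ j, IsTempFun α β (Sγ j) (Tγ j))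
    (hfeas : ∀ j t, 0 ≤ t → T j t ≤ 1)
    (hSint : ∀ j (t : ℝ), IntervalIntegrable (S j) volume 0 t)
    (hC : ∀ j, IsLeast {t : ℝ | 0 ≤ t ∧ p j ≤ ∫ u in (0:ℝ)..t, S j u} (C j)) :
    (∀ t : ℝ, (∑ j, Sγ j t) ≤ 1 / γ ∧ 1 / γ < 1) ∧
    (∀ j t, 0 ≤ t → Tγ j (γ * t) ≤ T j t ∧ (0 < T j t → Tγ j (γ * t) < T j t)) ∧
    (∀ j t, 0 ≤ t → Tγ j t ≤ 1) ∧
    (∀ j, IsLeast {t : ℝ | 0 ≤ t ∧ p j ≤ ∫ u in (0:ℝ)..t, Sγ j u} (γ * C j)) := by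
  have hγ0 : (0:ℝ) < γ := lt_trans zero_lt_one hγ
  have hγne : γ ≠ 0 := ne_of_gt hγ0
  -- the comparison, from comp_aux
  have hcmp : ∀ j t, 0 ≤ t → Tγ j (γ * t) ≤ T j t ∧ (0 < T j t → Tγ j (γ * t) < T j t) := by
    intro j
    obtain ⟨hγ0', hγnn, hγcont, hγder⟩ := hTγ j
    obtain ⟨hT0', hTnn, hTcont, hTder⟩ := hT j
    refine comp_aux α β γ hα hγ (S j) (fun t => Tγ j (γ * t)) (T j) ?_ hTnn ?_ ?_ hTcont ?_ ?_
    · simp [hγ0']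
    · intro t ht; exact hγnn _ (mul_nonneg hγ0.le ht)
    · exact hγcont.comp (continuous_const.mul continuous_id).continuousOn
        (fun t ht => mul_nonneg hγ0.le ht)
    · intro t ht hft
      have hγt : 0 < γ * t := mul_pos hγ0 ht
      have hder := hγder (γ * t) hγt
      rw [if_pos hft] at hder
      have hinner : HasDerivAt (fun u : ℝ => γ * u) γ t := by
        simpa using (hasDerivAt_id t).const_mul γ
      have := HasDerivAt.comp t hder hinner
      have e : γ * α + (β - α) * S j t = (α * (1 - Sγ j (γ * t)) + β * Sγ j (γ * t)) * γ := by
        rw [hscale j t]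
        have hc : S j t / γ * γ = S j t := div_mul_cancel₀ _ hγne
        linear_combination (α - β) * hc
      rw [e]; exact this
    · intro t ht
      refine ⟨_, ?_, hTder t ht⟩
      split_ifs with h
      · nlinarith [hS01 j t]
      · have : α * (1 - S j t) + β * S j t = α + (β - α) * S j t := by ring
        rw [← this]; exact le_max_right _ _
  -- integral change of variables
  have hint : ∀ j (s : ℝ), (∫ u in (0:ℝ)..(γ * s), Sγ j u) = ∫ u in (0:ℝ)..s, S j u := by
    intro j s
    have h1 : (∫ u in (0:ℝ)..s, Sγ j (γ * u)) = γ⁻¹ • ∫ u in (γ*0:ℝ)..(γ*s), Sγ j u :=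
      intervalIntegral.integral_comp_mul_left (Sγ j) hγne
    have h2 : (∫ u in (0:ℝ)..s, Sγ j (γ * u)) = γ⁻¹ • ∫ u in (0:ℝ)..s, S j u := by
      rw [show (∫ u in (0:ℝ)..s, Sγ j (γ * u)) = ∫ u in (0:ℝ)..s, S j u / γ from
        intervalIntegral.integral_congr (fun u _ => hscale j u)]
      simp [intervalIntegral.integral_div, smul_eq_mul, div_eq_inv_mul]
    rw [mul_zero] at h1
    have := h1.symm.trans h2
    rw [smul_right_inj (inv_ne_zero hγne)] at this
    linarith [this]
  refine ⟨?_, hcmp, ?_, ?_⟩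
  · intro t
    have h1γ : 1 / γ < 1 := (div_lt_one hγ0).2 hγ
    refine ⟨?_, h1γ⟩
    have ht : γ * (t / γ) = t := mul_div_cancel₀ t hγne
    calc (∑ j, Sγ j t) = ∑ j, S j (t / γ) / γ := by
          refine Finset.sum_congr rfl (fun j _ => ?_)
          rw [← hscale j (t / γ), ht]
      _ = (∑ j, S j (t / γ)) / γ := by rw [Finset.sum_div]
      _ ≤ 1 / γ := by
          exact div_le_div_of_nonneg_right (hman (t / γ)) hγ0.le
  · intro j t ht
    have ht' : 0 ≤ t / γ := div_nonneg ht hγ0.le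
    have h := (hcmp j (t / γ) ht').1
    rw [mul_div_cancel₀ t hγne] at h
    exact h.trans (hfeas j (t / γ) ht')
  · intro j
    obtain ⟨⟨hC0, hCp⟩, hClb⟩ := hC j
    constructor
    · exact ⟨mul_nonneg hγ0.le hC0, by rw [hint j (C j)]; exact hCp⟩
    · rintro x ⟨hx0, hxp⟩
      have hx : γ * (x / γ) = x := mul_div_cancel₀ x hγne
      have hmem : x / γ ∈ {t : ℝ | 0 ≤ t ∧ p j ≤ ∫ u in (0:ℝ)..t, S j u} := by
        refine ⟨div_nonneg hx0 hγ0.le, ?_⟩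
        rw [← hint j (x / γ), hx]
        exact hxp
      have := hClb hmem
      calc γ * C j ≤ γ * (x / γ) := by
            exact mul_le_mul_of_nonneg_left this hγ0.le
        _ = x := hx
end

section
/- The set 𝒞^< of completion-time vectors of feasible normal schedules that complete jobs in a fixed linear order < is a closed convex polyhedron in ℝⁿ (it is the projection of the polyhedron defined by the linear feasibility constraints in variables (C, W, T) onto the C-coordinates). -/
/-!
`𝒞^<` is the image of the polyhedron of feasible `(C, W, T)` under the linear projection onto
`C`, so it is convex. Projections of closed sets need not be closed, but the auxiliary variables
can be confined to a compact box: `T` lies in `[0, 1]` by definition, the entries `W_{i,j}` of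
actual jobs increase in `i` up to `p_j`, and the column of `W` that indexes no job can be set to
`0`. Projection along a compact factor is a closed map.
-/

/-- Prepend the breakpoint `C₀ = 0` to a completion-time vector. -/
def withZero {n : ℕ} (Cv : Fin n → ℝ) : Fin (n + 1) → ℝ := Fin.cons 0 Cv

open Set

theorem IsClosed.image_fst_inter_univ_prod {X Y : Type*} [TopologicalSpace X] [TopologicalSpace Y]
    {s : Set (X × Y)} {K : Set Y} (hs : IsClosed s) (hK : IsCompact K) :
    IsClosed (Prod.fst '' (s ∩ univ ×ˢ K)) := by
  have : CompactSpace K := isCompact_iff_compactSpace.mp hK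
  convert isClosedMap_fst_of_compactSpace _
    (hs.preimage (continuous_fst.prodMk (continuous_subtype_val.comp continuous_snd)) :
      IsClosed ((fun z : X × K => (z.1, (z.2 : Y))) ⁻¹' s)) using 1
  ext x
  simp [and_comm]

variable {n : ℕ} {α β : ℝ} {p C : Fin n → ℝ} {W T : Fin (n + 1) → Fin (n + 1) → ℝ}

@[simp] theorem withZero_zero (C : Fin n → ℝ) : withZero C 0 = 0 := rfl

@[simp] theorem withZero_succ (C : Fin n → ℝ) (j : Fin n) : withZero C j.succ = C j := rfl

@[simp] theorem withZero_add (C C' : Fin n → ℝ) :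
    withZero (C + C') = withZero C + withZero C' := by
  ext i; refine i.cases ?_ ?_ <;> simp

@[simp] theorem withZero_smul (a : ℝ) (C : Fin n → ℝ) :
    withZero (a • C) = a • withZero C := by
  ext i; refine i.cases ?_ ?_ <;> simp

@[fun_prop] theorem continuous_withZero :
    Continuous (withZero : (Fin n → ℝ) → Fin (n + 1) → ℝ) :=
  continuous_pi fun i => i.cases (by simpa using continuous_const) (by simpa using continuous_apply)

/-- Row `i` of `W` and `T` is the paper's breakpoint `C_i`, row `0` carrying `W₀ = T₀ = 0`;
column `j.succ` is job `j`. -/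
def IsNormalSchedule (α β : ℝ) (p C : Fin n → ℝ) (W T : Fin (n + 1) → Fin (n + 1) → ℝ) :
    Prop :=
  (∀ i j, 0 ≤ W i j) ∧ (∀ i j, 0 ≤ T i j ∧ T i j ≤ 1) ∧
  (∀ j, W 0 j = 0 ∧ T 0 j = 0) ∧
  (∀ (i : Fin n) (j : Fin (n + 1)), W i.castSucc j ≤ W i.succ j) ∧
  (∀ (i : Fin (n + 1)) (j : Fin n), (j.succ : Fin (n + 1)) ≤ i → W i j.succ = p j) ∧
  (∀ i : Fin n, (∑ j : Fin n, (W i.succ j.succ - W i.castSucc j.succ))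
      ≤ withZero C i.succ - withZero C i.castSucc) ∧
  (∀ i j : Fin n,
    α * (withZero C i.succ - withZero C i.castSucc)
      + (β - α) * (W i.succ j.succ - W i.castSucc j.succ)
      ≤ T i.succ j.succ - T i.castSucc j.succ)

def completionVectors (α β : ℝ) (p : Fin n → ℝ) : Set (Fin n → ℝ) :=
  {C | (∀ i, 0 ≤ C i) ∧ (∀ i k : Fin n, i ≤ k → C i ≤ C k) ∧
    ∃ W T, IsNormalSchedule α β p C W T}

def normalSchedules (α β : ℝ) (p : Fin n → ℝ) :
    Set ((Fin n → ℝ) × (Fin (n + 1) → Fin (n + 1) → ℝ) × (Fin (n + 1) → Fin (n + 1) → ℝ)) :=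
  {x | (∀ i, 0 ≤ x.1 i) ∧ (∀ i k : Fin n, i ≤ k → x.1 i ≤ x.1 k) ∧
    IsNormalSchedule α β p x.1 x.2.1 x.2.2}

theorem completionVectors_eq_image_fst :
    completionVectors α β p = Prod.fst '' normalSchedules α β p := by
  ext C
  constructor
  · rintro ⟨hC, hmono, W, T, h⟩
    exact ⟨(C, W, T), ⟨hC, hmono, h⟩, rfl⟩
  · rintro ⟨⟨C, W, T⟩, ⟨hC, hmono, h⟩, rfl⟩
    exact ⟨hC, hmono, W, T, h⟩

theorem isClosed_normalSchedules : IsClosed (normalSchedules α β p) := by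
  simp only [normalSchedules, IsNormalSchedule, ofPred_and, ofPred_forall]
  repeat' first
    | apply IsClosed.inter
    | refine isClosed_iInter fun _ => ?_
    | apply isClosed_le
    | apply isClosed_eq
  all_goals fun_prop

theorem convex_normalSchedules : Convex ℝ (normalSchedules α β p) := by
  rintro ⟨C, W, T⟩ ⟨hC, hCmono, hW, hT, hinit, hWmono, hWp, hsum, hslope⟩
    ⟨C', W', T'⟩ ⟨hC', hCmono', hW', hT', hinit', hWmono', hWp', hsum', hslope'⟩
    a b ha hb hab
  simp only [normalSchedules, IsNormalSchedule, mem_ofPred_eq, Prod.smul_mk, Prod.mk_add_mk]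
  refine ⟨fun i => ?_, fun i k hik => ?_, fun i j => ?_, fun i j => ⟨?_, ?_⟩,
    fun j => ⟨?_, ?_⟩, fun i j => ?_, fun i j hij => ?_, fun i => ?_, fun i j => ?_⟩
  all_goals simp only [withZero_add, withZero_smul, Pi.add_apply, Pi.smul_apply, smul_eq_mul]
  · linear_combination a * hC i + b * hC' i
  · linear_combination a * hCmono i k hik + b * hCmono' i k hik
  · linear_combination a * hW i j + b * hW' i j
  · linear_combination a * (hT i j).1 + b * (hT' i j).1
  · linear_combination a * (hT i j).2 + b * (hT' i j).2 + hab
  · linear_combination a * (hinit j).1 + b * (hinit' j).1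
  · linear_combination a * (hinit j).2 + b * (hinit' j).2
  · linear_combination a * hWmono i j + b * hWmono' i j
  · linear_combination a * hWp i j hij + b * hWp' i j hij + p j * hab
  · simp only [Finset.sum_sub_distrib, Finset.sum_add_distrib, ← Finset.mul_sum]
      at hsum hsum' ⊢
    linear_combination a * hsum i + b * hsum' i
  · linear_combination a * hslope i j + b * hslope' i j

theorem IsNormalSchedule.work_le (h : IsNormalSchedule α β p C W T) (i : Fin (n + 1))
    (j : Fin n) :
    W i j.succ ≤ p j := by
  obtain ⟨-, -, -, hWmono, hWp, -⟩ := h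
  calc W i j.succ ≤ W (Fin.last n) j.succ :=
        (Fin.monotone_iff_le_succ (f := fun i => W i j.succ)).mpr (fun i => hWmono i j.succ)
          (Fin.le_last i)
    _ = p j := hWp _ j (Fin.le_last _)

/-- Column `0` of `W` belongs to no job, so it can be reset to `0`; afterwards `W` is bounded. -/
theorem IsNormalSchedule.withZero_tail (h : IsNormalSchedule α β p C W T) :
    IsNormalSchedule α β p C (fun i => withZero (Fin.tail (W i))) T := by
  obtain ⟨hW, hT, hinit, hWmono, hWp, hsum, hslope⟩ := h
  refine ⟨fun i j => ?_, hT, fun j => ⟨?_, (hinit j).2⟩, fun i j => ?_, hWp, hsum, hslope⟩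
  all_goals refine j.cases ?_ (fun j => ?_)
  all_goals simp [Fin.tail, hW, hinit, hWmono]

theorem image_fst_normalSchedules_eq_inter :
    Prod.fst '' normalSchedules α β p =
      Prod.fst '' (normalSchedules α β p ∩
        univ ×ˢ (Icc 0 (fun _ => withZero p) ×ˢ Icc 0 1)) := by
  refine (image_mono inter_subset_left).antisymm' ?_
  rintro _ ⟨⟨C, W, T⟩, ⟨hC, hCmono, h⟩, rfl⟩
  obtain ⟨hW, hT, -⟩ := id h
  refine ⟨(C, fun i => withZero (Fin.tail (W i)), T), ⟨⟨hC, hCmono, h.withZero_tail⟩, trivial,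
    ⟨fun i j => ?_, fun i j => ?_⟩, fun i j => (hT i j).1, fun i j => (hT i j).2⟩, rfl⟩
  all_goals refine j.cases ?_ (fun j => ?_)
  all_goals simp [Fin.tail, hW, h.work_le]

theorem isClosed_completionVectors : IsClosed (completionVectors α β p) := by
  rw [completionVectors_eq_image_fst, image_fst_normalSchedules_eq_inter]
  exact isClosed_normalSchedules.image_fst_inter_univ_prod (isCompact_Icc.prod isCompact_Icc)

theorem convex_completionVectors : Convex ℝ (completionVectors α β p) := by
  rw [completionVectors_eq_image_fst]
  exact convex_normalSchedules.linear_image (LinearMap.fst ℝ _ _)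

theorem completion_vectors_closed_convex_general (n : ℕ) (α β : ℝ)
    (p : Fin n → ℝ) :
    IsClosed {Cv : Fin n → ℝ |
        (∀ i, 0 ≤ Cv i) ∧ (∀ i k : Fin n, i ≤ k → Cv i ≤ Cv k) ∧
        ∃ W T : Fin (n + 1) → Fin (n + 1) → ℝ,
          (∀ i j, 0 ≤ W i j) ∧ (∀ i j, 0 ≤ T i j ∧ T i j ≤ 1) ∧
          (∀ j, W 0 j = 0 ∧ T 0 j = 0) ∧
          (∀ (i : Fin n) (j : Fin (n + 1)), W i.castSucc j ≤ W i.succ j) ∧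
          (∀ (i : Fin (n + 1)) (j : Fin n), (j.succ : Fin (n + 1)) ≤ i → W i j.succ = p j) ∧
          (∀ i : Fin n, (∑ j : Fin n, (W i.succ j.succ - W i.castSucc j.succ))
              ≤ withZero Cv i.succ - withZero Cv i.castSucc) ∧
          (∀ i j : Fin n,
            α * (withZero Cv i.succ - withZero Cv i.castSucc)
              + (β - α) * (W i.succ j.succ - W i.castSucc j.succ)
              ≤ T i.succ j.succ - T i.castSucc j.succ)} ∧
    Convex ℝ {Cv : Fin n → ℝ |
        (∀ i, 0 ≤ Cv i) ∧ (∀ i k : Fin n, i ≤ k → Cv i ≤ Cv k) ∧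
        ∃ W T : Fin (n + 1) → Fin (n + 1) → ℝ,
          (∀ i j, 0 ≤ W i j) ∧ (∀ i j, 0 ≤ T i j ∧ T i j ≤ 1) ∧
          (∀ j, W 0 j = 0 ∧ T 0 j = 0) ∧
          (∀ (i : Fin n) (j : Fin (n + 1)), W i.castSucc j ≤ W i.succ j) ∧
          (∀ (i : Fin (n + 1)) (j : Fin n), (j.succ : Fin (n + 1)) ≤ i → W i j.succ = p j) ∧
          (∀ i : Fin n, (∑ j : Fin n, (W i.succ j.succ - W i.castSucc j.succ))
              ≤ withZero Cv i.succ - withZero Cv i.castSucc) ∧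
          (∀ i j : Fin n,
            α * (withZero Cv i.succ - withZero Cv i.castSucc)
              + (β - α) * (W i.succ j.succ - W i.castSucc j.succ)
              ≤ T i.succ j.succ - T i.castSucc j.succ)} :=
  ⟨isClosed_completionVectors, convex_completionVectors⟩

/-- the set `𝒞^<` of completion-time vectors of feasible normal schedules
completing the jobs in a fixed order (jobs renumbered so that job `j` completes `j`-th,
with processing times `p`) is a closed convex set in `ℝⁿ`: it is the projection onto the
`C`-coordinates of the polyhedron in the variables `(C, W, T)` cut out by the linear
normal-schedule feasibility constraints. -/
theorem completion_vectors_closed_convex (n : ℕ) (α β : ℝ) (hα : α < 0) (hβ : 0 < β)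
    (p : Fin n → ℝ) :
    IsClosed {Cv : Fin n → ℝ |
        (∀ i, 0 ≤ Cv i) ∧ (∀ i k : Fin n, i ≤ k → Cv i ≤ Cv k) ∧
        ∃ W T : Fin (n + 1) → Fin (n + 1) → ℝ,
          (∀ i j, 0 ≤ W i j) ∧ (∀ i j, 0 ≤ T i j ∧ T i j ≤ 1) ∧
          (∀ j, W 0 j = 0 ∧ T 0 j = 0) ∧
          (∀ (i : Fin n) (j : Fin (n + 1)), W i.castSucc j ≤ W i.succ j) ∧
          (∀ (i : Fin (n + 1)) (j : Fin n), (j.succ : Fin (n + 1)) ≤ i → W i j.succ = p j) ∧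
          (∀ i : Fin n, (∑ j : Fin n, (W i.succ j.succ - W i.castSucc j.succ))
              ≤ withZero Cv i.succ - withZero Cv i.castSucc) ∧
          (∀ i j : Fin n,
            α * (withZero Cv i.succ - withZero Cv i.castSucc)
              + (β - α) * (W i.succ j.succ - W i.castSucc j.succ)
              ≤ T i.succ j.succ - T i.castSucc j.succ)} ∧
    Convex ℝ {Cv : Fin n → ℝ |
        (∀ i, 0 ≤ Cv i) ∧ (∀ i k : Fin n, i ≤ k → Cv i ≤ Cv k) ∧
        ∃ W T : Fin (n + 1) → Fin (n + 1) → ℝ,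
          (∀ i j, 0 ≤ W i j) ∧ (∀ i j, 0 ≤ T i j ∧ T i j ≤ 1) ∧
          (∀ j, W 0 j = 0 ∧ T 0 j = 0) ∧
          (∀ (i : Fin n) (j : Fin (n + 1)), W i.castSucc j ≤ W i.succ j) ∧
          (∀ (i : Fin (n + 1)) (j : Fin n), (j.succ : Fin (n + 1)) ≤ i → W i j.succ = p j) ∧
          (∀ i : Fin n, (∑ j : Fin n, (W i.succ j.succ - W i.castSucc j.succ))
              ≤ withZero Cv i.succ - withZero Cv i.castSucc) ∧
          (∀ i j : Fin n,
            α * (withZero Cv i.succ - withZero Cv i.castSucc)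
              + (β - α) * (W i.succ j.succ - W i.castSucc j.succ)
              ≤ T i.succ j.succ - T i.castSucc j.succ)} :=
  completion_vectors_closed_convex_general n α β p
end

section
/- Equal-work, hotter-job lemma: suppose jobs i and j have W̄_i(t^<) = W̄_j(t^<) and W̄_i(t^>) = W̄_j(t^>) (equal remaining work at both times), but T_i(t^<) < T_j(t^<) and T_i(t^>) > T_j(t^>). Then there exists t₀ ∈ (t^<, t^>) with T_i(t₀) = 0. -/
open MeasureTheory

/-! A job's temperature changes at rate `α (1 - S) + β S` under load `S` while it is positive, and
at least at that rate always. Integrating, `(β - α) ∫ S = T b - T a - α (b - a)` over an interval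
where the job stays hot, and `≤` in general. So if `T_i` stayed positive on `(t^<, t^>)`, equal
work on `i` and `j` would give `T_i(t^>) - T_i(t^<) ≤ T_j(t^>) - T_j(t^<)`, contradicting the
reversal of the temperature order. -/

section WorkTemperature

variable {α β a b : ℝ} {S T D : ℝ → ℝ}

theorem integral_load_rate (hS : IntervalIntegrable S volume a b) :
    ∫ t in a..b, (α * (1 - S t) + β * S t) = α * (b - a) + (β - α) * ∫ t in a..b, S t := by
  have h_affine : ∀ t, α * (1 - S t) + β * S t = α + (β - α) * S t := fun t => by ring
  simp only [h_affine]
  rw [intervalIntegral.integral_add intervalIntegrable_const (hS.const_mul _),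
    intervalIntegral.integral_const, intervalIntegral.integral_const_mul, smul_eq_mul, mul_comm]

theorem work_le_of_rate_le (hab : a ≤ b) (hS : IntervalIntegrable S volume a b)
    (hT : ∀ t ∈ Set.Icc a b, HasDerivAt T (D t) t) (hD : IntervalIntegrable D volume a b)
    (h_rate : ∀ t, α * (1 - S t) + β * S t ≤ D t) :
    (β - α) * ∫ t in a..b, S t ≤ T b - T a - α * (b - a) := by
  have h_mono := intervalIntegral.integral_mono_on hab
    ((intervalIntegrable_const.sub hS).const_mul α |>.add (hS.const_mul β)) hD
    (fun t _ => h_rate t)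
  rw [integral_load_rate hS,
    intervalIntegral.integral_eq_sub_of_hasDerivAt (by rwa [Set.uIcc_of_le hab]) hD] at h_mono
  linarith

theorem work_eq_of_rate_eq (hab : a ≤ b) (hS : IntervalIntegrable S volume a b)
    (hT : ∀ t ∈ Set.Icc a b, HasDerivAt T (D t) t) (hD : IntervalIntegrable D volume a b)
    (h_rate : ∀ t ∈ Set.Ioo a b, D t = α * (1 - S t) + β * S t) :
    (β - α) * ∫ t in a..b, S t = T b - T a - α * (b - a) := by
  have h_integral : ∫ t in a..b, D t = ∫ t in a..b, (α * (1 - S t) + β * S t) := by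
    rw [intervalIntegral.integral_of_le hab, intervalIntegral.integral_of_le hab,
      integral_Ioc_eq_integral_Ioo, integral_Ioc_eq_integral_Ioo]
    exact setIntegral_congr_fun measurableSet_Ioo h_rate
  rw [integral_load_rate hS,
    intervalIntegral.integral_eq_sub_of_hasDerivAt (by rwa [Set.uIcc_of_le hab]) hD] at h_integral
  linarith

end WorkTemperature

theorem equal_work_hotter_job_general (α β : ℝ)
    (Si Sj Ti Tj Di Dj : ℝ → ℝ) (tlt tgt : ℝ) (hlt : tlt < tgt)
    (hTi : ∀ t, 0 ≤ Ti t)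
    (hTid : ∀ t, HasDerivAt Ti (Di t) t) (hTjd : ∀ t, HasDerivAt Tj (Dj t) t)
    (hDjge : ∀ t, α * (1 - Sj t) + β * Sj t ≤ Dj t)
    (hDieq : ∀ t, 0 < Ti t → Di t = α * (1 - Si t) + β * Si t)
    (hSiint : IntervalIntegrable Si volume tlt tgt)
    (hSjint : IntervalIntegrable Sj volume tlt tgt)
    (hDiint : IntervalIntegrable Di volume tlt tgt)
    (hDjint : IntervalIntegrable Dj volume tlt tgt)
    (hwork : (∫ t in tlt..tgt, Si t) = ∫ t in tlt..tgt, Sj t)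
    (hTlt : Ti tlt < Tj tlt) (hTgt : Tj tgt < Ti tgt) :
    ∃ t₀ ∈ Set.Ioo tlt tgt, Ti t₀ = 0 := by
  by_contra! h_ne
  have h_hot : ∀ t ∈ Set.Ioo tlt tgt, 0 < Ti t := fun t ht => (hTi t).lt_of_ne' (h_ne t ht)
  have h_work_i := work_eq_of_rate_eq hlt.le hSiint (fun t _ => hTid t) hDiint
    (fun t ht => hDieq t (h_hot t ht))
  have h_work_j := work_le_of_rate_le hlt.le hSjint (fun t _ => hTjd t) hDjint hDjge
  rw [hwork] at h_work_i
  linarith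

/-- equal-work, hotter-job lemma: if jobs `i` and `j` receive the same
amount of work over `[t^<, t^>]` but `T_i(t^<) < T_j(t^<)` and `T_i(t^>) > T_j(t^>)`,
then `T_i` must vanish somewhere in the open interval `(t^<, t^>)`. -/
theorem equal_work_hotter_job (α β : ℝ) (hα : α < 0) (hβ : 0 < β)
    (Si Sj Ti Tj Di Dj : ℝ → ℝ) (tlt tgt : ℝ) (hlt : tlt < tgt)
    (hSi : ∀ t, 0 ≤ Si t ∧ Si t ≤ 1) (hSj : ∀ t, 0 ≤ Sj t ∧ Sj t ≤ 1)
    (hTi : ∀ t, 0 ≤ Ti t) (hTj : ∀ t, 0 ≤ Tj t)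
    (hTid : ∀ t, HasDerivAt Ti (Di t) t) (hTjd : ∀ t, HasDerivAt Tj (Dj t) t)
    (hDige : ∀ t, α * (1 - Si t) + β * Si t ≤ Di t)
    (hDjge : ∀ t, α * (1 - Sj t) + β * Sj t ≤ Dj t)
    (hDieq : ∀ t, 0 < Ti t → Di t = α * (1 - Si t) + β * Si t)
    (hDjeq : ∀ t, 0 < Tj t → Dj t = α * (1 - Sj t) + β * Sj t)
    (hSiint : IntervalIntegrable Si volume tlt tgt)
    (hSjint : IntervalIntegrable Sj volume tlt tgt)
    (hDiint : IntervalIntegrable Di volume tlt tgt)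
    (hDjint : IntervalIntegrable Dj volume tlt tgt)
    (hwork : (∫ t in tlt..tgt, Si t) = ∫ t in tlt..tgt, Sj t)
    (hTlt : Ti tlt < Tj tlt) (hTgt : Tj tgt < Ti tgt) :
    ∃ t₀ ∈ Set.Ioo tlt tgt, Ti t₀ = 0 :=
  equal_work_hotter_job_general α β Si Sj Ti Tj Di Dj tlt tgt hlt hTi hTid hTjd hDjge hDieq hSiint
    hSjint hDiint hDjint hwork hTlt hTgt
end

section
/- Makespan lower bound via single-job bound: for any feasible schedule of jobs J (any number of machines), and any job j ∈ J, the completion time C_j is at least q_j, where q_j = p_j(1 − β_j/α_j) + 1/α_j if p_j β_j > 1 and q_j = p_j otherwise. Consequently the makespan is at least max_j q_j. -/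
open MeasureTheory

/-- makespan lower bound via single-job bound: in any feasible schedule,
every job `j` completes no earlier than its single-job minimal makespan
`q j = p j (1 - β j/α j) + 1/α j` if `p j · β j > 1`, else `q j = p j`; hence the
makespan `M` is at least `max_j q_j`. -/
theorem makespan_lower_bound_single_job {ι : Type*} (J : Finset ι)
    (p α β C q : ι → ℝ) (S : ι → ℝ → ℝ) (T D : ι → ℝ → ℝ) (M : ℝ)
    (hp : ∀ j ∈ J, 0 < p j) (hα : ∀ j ∈ J, α j < 0) (hβ : ∀ j ∈ J, 0 < β j)
    (hq : ∀ j ∈ J, q j = if 1 < p j * β j then p j * (1 - β j / α j) + 1 / α j else p j)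
    (hS : ∀ j ∈ J, ∀ t, 0 ≤ S j t ∧ S j t ≤ 1)
    (hT0 : ∀ j ∈ J, T j 0 = 0)
    (hT : ∀ j ∈ J, ∀ t, 0 ≤ T j t ∧ T j t ≤ 1)
    (hTd : ∀ j ∈ J, ∀ t, HasDerivAt (T j) (D j t) t)
    (hD : ∀ j ∈ J, ∀ t, α j * (1 - S j t) + β j * S j t ≤ D j t)
    (hCnn : ∀ j ∈ J, 0 ≤ C j)
    (hSint : ∀ j ∈ J, IntervalIntegrable (S j) volume 0 (C j))
    (hDint : ∀ j ∈ J, IntervalIntegrable (D j) volume 0 (C j))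
    (hwork : ∀ j ∈ J, (∫ t in (0:ℝ)..(C j), S j t) = p j)
    (hM : ∀ j ∈ J, C j ≤ M) :
    (∀ j ∈ J, q j ≤ C j) ∧ ∀ j ∈ J, q j ≤ M := by
  have main : ∀ j ∈ J, q j ≤ C j := by
    intro j hj
    have hCj := hCnn j hj
    have hαj := hα j hj
    have hβj := hβ j hj
    have hpj := hp j hj
    have hkey : α j * C j + (β j - α j) * p j ≤ 1 := by
      have hftc : (∫ t in (0:ℝ)..C j, D j t) = T j (C j) - T j 0 :=
        intervalIntegral.integral_eq_sub_of_hasDerivAt (fun t _ => hTd j hj t) (hDint j hj)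
      have hint : IntervalIntegrable (fun t => α j * (1 - S j t) + β j * S j t)
          volume 0 (C j) := by
        have h1 : IntervalIntegrable (fun t => (β j - α j) * S j t) volume 0 (C j) :=
          (hSint j hj).const_mul _
        have h2 : IntervalIntegrable (fun t => α j + (β j - α j) * S j t) volume 0 (C j) :=
          (intervalIntegrable_const (c := α j)).add h1
        have : (fun t => α j * (1 - S j t) + β j * S j t)
            = fun t => α j + (β j - α j) * S j t := by
          funext t; ring
        rw [this]; exact h2
      have hmono : (∫ t in (0:ℝ)..C j, (α j * (1 - S j t) + β j * S j t))
          ≤ ∫ t in (0:ℝ)..C j, D j t :=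
        intervalIntegral.integral_mono_on hCj hint (hDint j hj) (fun t _ => hD j hj t)
      have hcalc : (∫ t in (0:ℝ)..C j, (α j * (1 - S j t) + β j * S j t))
          = α j * C j + (β j - α j) * p j := by
        have heq : (fun t => α j * (1 - S j t) + β j * S j t)
            = fun t => α j + (β j - α j) * S j t := by
          funext t; ring
        rw [heq]
        rw [intervalIntegral.integral_add (intervalIntegrable_const (c := α j))
          ((hSint j hj).const_mul _)]
        rw [intervalIntegral.integral_const_mul, hwork j hj, intervalIntegral.integral_const, smul_eq_mul]
        ring
      have hT1 : T j (C j) ≤ 1 := (hT j hj (C j)).2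
      have hT0' : T j 0 = 0 := hT0 j hj
      linarith [hcalc ▸ hmono, hftc ▸ hmono]
    rw [hq j hj]
    split_ifs with h
    · have heq : p j * (1 - β j / α j) + 1 / α j = (1 - (β j - α j) * p j) / α j := by
        have hne : α j ≠ 0 := ne_of_lt hαj
        field_simp
        ring
      rw [heq, div_le_iff_of_neg hαj]
      nlinarith
    · have hle : (∫ t in (0:ℝ)..C j, S j t) ≤ ∫ t in (0:ℝ)..C j, (1:ℝ) :=
        intervalIntegral.integral_mono_on hCj (hSint j hj) intervalIntegrable_const
          (fun t _ => (hS j hj t).2)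
      rw [hwork j hj] at hle
      simpa using hle
  exact ⟨main, fun j hj => le_trans (main j hj) (hM j hj)⟩
end
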